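/- Let G be the directed cycle on n vertices in which every edge has weight 1 − K/n, where K is an integer with 1 ≤ K < n, and let the thresholds θ_v be independent Uniform[0,1] random variables. For any seed set T of K distinct vertices, apply the integral influence vector x = 1_T; let ℓ₁, …, ℓ_K (with Σ_j ℓ_j = n) denote the lengths of the arcs of the cycle starting at each seed vertex and ending just before the next seed vertex. Then the expected size of the final activated set equals Σ_{j=1}^{K} Σ_{i=1}^{ℓ_j} (1 − K/n)^{i−1}, and this quantity is at most n(1 − (1 − K/n)^{n/K}). -/

import Mathlib

open MeasureTheory Finset
open scoped Classical

/-- The final activated set of the linear influence process on a weighted digraph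
with weights `wt`, thresholds `θ` and direct influences `x`: starting from `∅`, a
vertex `v` activates once the total weight of edges from the active set into `v`
plus `x v` reaches `θ v`; the process runs for `|W|` rounds. -/
noncomputable def finalSet {W : Type*} [Fintype W] (wt : W → W → ℝ) (θ x : W → ℝ) :
    Finset W :=
  (fun S => S ∪ Finset.univ.filter (fun v => θ v ≤ (∑ u ∈ S, wt u v) + x v))^[Fintype.card W] ∅

/-!
With positive thresholds, a vertex outside `T` can only be activated by its predecessor on the
cycle, which happens iff its threshold is at most `w = 1 - K/n`, while seeds activate at once.
So a vertex `d` steps after the nearest seed behind it ends up active iff the `d` thresholds from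
just after that seed up to the vertex are all at most `w`, an event of probability `w ^ d`;
summing over the arcs gives the formula. Each arc of length `ℓ` contributes
`(1 - w ^ ℓ) / (1 - w)`, and by AM–GM `∑ₜ w ^ ℓₜ ≥ K w ^ (n/K)` when `∑ₜ ℓₜ = n`.
-/

open Fin.NatCast Fin.CommRing

lemma Fin.natCast_inj_of_lt {n : ℕ} [NeZero n] {i j : ℕ} (hi : i < n) (hj : j < n)
    (h : (i : Fin n) = j) : i = j := by
  simpa [Fin.ext_iff, Nat.mod_eq_of_lt hi, Nat.mod_eq_of_lt hj] using h

lemma Fin.val_add_natCast {n : ℕ} [NeZero n] (t : Fin n) (k : ℕ) :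
    ((t + k : Fin n) : ℕ) = (t + k) % n := by
  simp [Fin.val_add, Nat.add_mod]

section SeedArcs

variable {n : ℕ} [NeZero n] {T : Finset (Fin n)}

noncomputable def seedDist (T : Finset (Fin n)) (v : Fin n) : ℕ :=
  sInf {k : ℕ | v - (k : Fin n) ∈ T}

noncomputable def arcLen (T : Finset (Fin n)) (t : Fin n) : ℕ :=
  sInf {k : ℕ | 0 < k ∧ t + (k : Fin n) ∈ T}

lemma seedDist_le {v : Fin n} {k : ℕ} (h : v - (k : Fin n) ∈ T) : seedDist T v ≤ k :=
  Nat.sInf_le h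

lemma sub_seedDist_mem (hT : T.Nonempty) (v : Fin n) : v - (seedDist T v : Fin n) ∈ T := by
  obtain ⟨s, hs⟩ := hT
  exact Nat.sInf_mem (s := {k : ℕ | v - (k : Fin n) ∈ T}) ⟨(v - s : Fin n), by
    simpa [Fin.cast_val_eq_self]⟩

lemma seedDist_lt (hT : T.Nonempty) (v : Fin n) : seedDist T v < n := by
  obtain ⟨s, hs⟩ := hT
  exact (seedDist_le (k := (v - s : Fin n)) (by simpa [Fin.cast_val_eq_self])).trans_lt
    (Fin.is_lt _)

lemma seedDist_eq_zero_iff (hT : T.Nonempty) {v : Fin n} : seedDist T v = 0 ↔ v ∈ T :=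
  ⟨fun h => by simpa [h] using sub_seedDist_mem hT v,
    fun h => Nat.le_zero.mp (seedDist_le (by simpa using h))⟩

lemma seedDist_eq_seedDist_sub_one_add_one (hT : T.Nonempty) {v : Fin n} (hv : v ∉ T) :
    seedDist T v = seedDist T (v - 1) + 1 := by
  obtain ⟨m, hm⟩ := Nat.exists_eq_succ_of_ne_zero (mt (seedDist_eq_zero_iff hT).mp hv)
  have hle : seedDist T v ≤ seedDist T (v - 1) + 1 := seedDist_le <| by
    simpa [sub_sub, add_comm] using sub_seedDist_mem hT (v - 1)
  have hge : seedDist T (v - 1) ≤ m := seedDist_le <| by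
    simpa [hm, sub_sub, add_comm] using sub_seedDist_mem hT v
  omega

lemma arcLen_pos_and_add_arcLen_mem {t : Fin n} (ht : t ∈ T) :
    0 < arcLen T t ∧ t + (arcLen T t : Fin n) ∈ T :=
  Nat.sInf_mem (s := {k : ℕ | 0 < k ∧ t + (k : Fin n) ∈ T}) ⟨n, Nat.pos_of_neZero n, by simpa⟩

lemma arcLen_le {t : Fin n} (ht : t ∈ T) : arcLen T t ≤ n :=
  Nat.sInf_le ⟨Nat.pos_of_neZero n, by simpa⟩

lemma seedDist_add_of_lt_arcLen {t : Fin n} (ht : t ∈ T) {i : ℕ} (hi : i < arcLen T t) :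
    seedDist T (t + i) = i := by
  have hle : seedDist T (t + i) ≤ i := seedDist_le (by simpa)
  by_contra hne
  have hmem := sub_seedDist_mem ⟨t, ht⟩ (t + i)
  rw [show t + (i : Fin n) - (seedDist T (t + i) : Fin n)
      = t + ((i - seedDist T (t + i) : ℕ) : Fin n) by rw [Nat.cast_sub hle]; ring] at hmem
  exact Nat.notMem_of_lt_sInf (show i - seedDist T (t + i) < arcLen T t by omega)
    ⟨by omega, hmem⟩

lemma seedDist_lt_arcLen (hT : T.Nonempty) (v : Fin n) :
    seedDist T v < arcLen T (v - seedDist T v) := by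
  obtain ⟨hpos, hmem⟩ := arcLen_pos_and_add_arcLen_mem (sub_seedDist_mem hT v)
  set t := v - (seedDist T v : Fin n)
  by_contra! h
  have : seedDist T v ≤ seedDist T v - arcLen T t := seedDist_le <| by
    rw [Nat.cast_sub h, show v - ((seedDist T v : Fin n) - (arcLen T t : Fin n))
      = t + (arcLen T t : Fin n) by ring]
    exact hmem
  omega

/-- The arcs starting at the seeds partition the cycle, and `seedDist` is the position
within its arc. -/
lemma sum_seedDist_eq {M : Type*} [AddCommMonoid M] (hT : T.Nonempty) (g : ℕ → M) :
    ∑ v, g (seedDist T v) = ∑ t ∈ T, ∑ i ∈ range (arcLen T t), g i := by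
  have hcover : (univ : Finset (Fin n))
      = T.biUnion fun t => (range (arcLen T t)).image fun i : ℕ => t + i :=
    (eq_univ_of_forall fun v => mem_biUnion.mpr ⟨_, sub_seedDist_mem hT v,
      mem_image.mpr ⟨seedDist T v, mem_range.mpr (seedDist_lt_arcLen hT v),
        sub_add_cancel v _⟩⟩).symm
  rw [hcover, sum_biUnion]
  · refine sum_congr rfl fun t ht => ?_
    rw [sum_image]
    · exact sum_congr rfl fun i hi =>
        congrArg g (seedDist_add_of_lt_arcLen ht (mem_range.mp hi))
    · intro i hi j hj hij
      exact Fin.natCast_inj_of_lt ((mem_range.mp hi).trans_le (arcLen_le ht))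
        ((mem_range.mp hj).trans_le (arcLen_le ht)) (add_left_cancel hij)
  · intro t ht t' ht' htt'
    refine disjoint_left.mpr fun a ha ha' => htt' ?_
    obtain ⟨i, hi, rfl⟩ := mem_image.mp ha
    obtain ⟨j, hj, hji⟩ := mem_image.mp ha'
    have hij : j = i := by
      rw [← seedDist_add_of_lt_arcLen ht' (mem_range.mp hj), hji,
        seedDist_add_of_lt_arcLen ht (mem_range.mp hi)]
    subst hij
    exact add_right_cancel hji.symm

lemma sum_arcLen (hT : T.Nonempty) : ∑ t ∈ T, arcLen T t = n := by
  simpa using (sum_seedDist_eq hT fun _ => (1 : ℕ)).symm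

end SeedArcs

section Activation

variable {W : Type*} [Fintype W] {wt : W → W → ℝ} {θ x : W → ℝ}

noncomputable def activationStep (wt : W → W → ℝ) (θ x : W → ℝ) (S : Finset W) : Finset W :=
  S ∪ univ.filter fun v => θ v ≤ (∑ u ∈ S, wt u v) + x v

lemma finalSet_eq_iterate_activationStep :
    finalSet wt θ x = (activationStep wt θ x)^[Fintype.card W] ∅ :=
  rfl

lemma monotone_iterate_activationStep : Monotone fun m => (activationStep wt θ x)^[m] ∅ :=
  monotone_nat_of_le_succ fun m => by
    rw [Function.iterate_succ_apply']
    exact subset_union_left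

end Activation

section UniformThresholds

variable {ι : Type*} [Fintype ι] {w : ℝ}

lemma volume_restrict_Icc_Iic (hw1 : w ≤ 1) :
    volume.restrict (Set.Icc (0 : ℝ) 1) (Set.Iic w) = ENNReal.ofReal w := by
  rw [Measure.restrict_apply measurableSet_Iic,
    show Set.Iic w ∩ Set.Icc 0 1 = Set.Icc 0 w by grind, Real.volume_Icc, sub_zero]

lemma pi_uniform_pi_Iic (I : Finset ι) (hw0 : 0 ≤ w) (hw1 : w ≤ 1) :
    Measure.pi (fun _ : ι => volume.restrict (Set.Icc (0 : ℝ) 1))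
        ((I : Set ι).pi fun _ => Set.Iic w)
      = ENNReal.ofReal (w ^ #I) := by
  rw [← Set.pi_univ_ite, Measure.pi_pi]
  simp [apply_ite, volume_restrict_Icc_Iic hw1, ENNReal.ofReal_pow hw0]

lemma ae_pi_uniform_mem_Ioc :
    ∀ᵐ θ ∂Measure.pi (fun _ : ι => volume.restrict (Set.Icc (0 : ℝ) 1)), ∀ v, θ v ∈ Set.Ioc 0 1 :=
  ae_all_iff.mpr fun _ => Measure.tendsto_eval_ae_ae <| by
    rw [← Measure.restrict_congr_set Ioc_ae_eq_Icc]
    exact ae_restrict_mem measurableSet_Ioc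

/-- Linearity of expectation, and independence of the coordinates in each summand. -/
lemma integral_card_filter_forall_le (I : ι → Finset ι) (hw0 : 0 ≤ w) (hw1 : w ≤ 1) :
    ∫ θ, (#{v | ∀ u ∈ I v, θ u ≤ w} : ℝ)
        ∂Measure.pi (fun _ : ι => volume.restrict (Set.Icc (0 : ℝ) 1))
      = ∑ v, w ^ #(I v) := by
  have hmeas (v : ι) : MeasurableSet ((I v : Set ι).pi fun _ => Set.Iic w) :=
    .pi (I v).countable_toSet fun _ _ => measurableSet_Iic
  have hcard (θ : ι → ℝ) : (#{v | ∀ u ∈ I v, θ u ≤ w} : ℝ)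
      = ∑ v, ((I v : Set ι).pi fun _ => Set.Iic w).indicator 1 θ := by
    simp only [Set.indicator_apply, Set.mem_pi, mem_coe, Set.mem_Iic, Pi.one_apply, sum_boole]
  simp_rw [hcard]
  rw [integral_finsetSum _ fun v _ => (integrable_const 1).indicator (hmeas v)]
  refine sum_congr rfl fun v _ => ?_
  rw [integral_indicator_one (hmeas v), Measure.real, pi_uniform_pi_Iic _ hw0 hw1,
    ENNReal.toReal_ofReal (pow_nonneg hw0 _)]

end UniformThresholds

section Cycle

variable {n : ℕ} [NeZero n] {T : Finset (Fin n)} {w : ℝ} {θ : Fin n → ℝ}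

def cycleWeight (w : ℝ) (u v : Fin n) : ℝ := if u = v - 1 then w else 0

def ReachedFromSeed (T : Finset (Fin n)) (w : ℝ) (θ : Fin n → ℝ) (v : Fin n) : Prop :=
  ∀ i < seedDist T v, θ (v - (i : Fin n)) ≤ w

lemma reachedFromSeed_of_mem (hT : T.Nonempty) {v : Fin n} (hv : v ∈ T) :
    ReachedFromSeed T w θ v := by
  simp [ReachedFromSeed, (seedDist_eq_zero_iff hT).mpr hv]

lemma reachedFromSeed_iff (hT : T.Nonempty) {v : Fin n} (hv : v ∉ T) :
    ReachedFromSeed T w θ v ↔ θ v ≤ w ∧ ReachedFromSeed T w θ (v - 1) := by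
  simp only [ReachedFromSeed, seedDist_eq_seedDist_sub_one_add_one hT hv,
    Nat.forall_lt_succ_left, Nat.cast_zero, sub_zero, Nat.cast_add, Nat.cast_one,
    sub_add_eq_sub_sub_swap]

lemma mem_activationStep_cycleWeight {S : Finset (Fin n)} {v : Fin n} :
    v ∈ activationStep (cycleWeight w) θ (fun v => if v ∈ T then 1 else 0) S ↔
      v ∈ S ∨ θ v ≤ (if v - 1 ∈ S then w else 0) + if v ∈ T then 1 else 0 := by
  simp [activationStep, cycleWeight, sum_ite_eq']

/-- With positive thresholds a non-seed can only activate through its active predecessor. -/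
lemma reachedFromSeed_of_mem_iterate (hT : T.Nonempty) (hθ : ∀ v, 0 < θ v) (m : ℕ) :
    ∀ v ∈ (activationStep (cycleWeight w) θ fun v => if v ∈ T then 1 else 0)^[m] ∅,
      ReachedFromSeed T w θ v := by
  induction m with
  | zero => simp
  | succ m ih =>
    intro v hv
    rw [Function.iterate_succ_apply', mem_activationStep_cycleWeight] at hv
    by_cases hvT : v ∈ T
    · exact reachedFromSeed_of_mem hT hvT
    rw [reachedFromSeed_iff hT hvT]
    rcases hv with hv | hv
    · exact (reachedFromSeed_iff hT hvT).mp (ih v hv)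
    rw [if_neg hvT, add_zero] at hv
    split_ifs at hv with hpred
    · exact ⟨hv, ih _ hpred⟩
    · exact absurd hv (hθ v).not_ge

lemma mem_iterate_of_reachedFromSeed (hT : T.Nonempty) (hθ : ∀ v, θ v ≤ 1) (m : ℕ) :
    ∀ v, seedDist T v ≤ m → ReachedFromSeed T w θ v →
      v ∈ (activationStep (cycleWeight w) θ fun v => if v ∈ T then 1 else 0)^[m + 1] ∅ := by
  induction m with
  | zero =>
    intro v hd _
    have hvT : v ∈ T := (seedDist_eq_zero_iff hT).mp (Nat.le_zero.mp hd)
    simp [mem_activationStep_cycleWeight, hvT, hθ v]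
  | succ m ih =>
    intro v hd hv
    by_cases hvT : v ∈ T
    · exact monotone_iterate_activationStep (Nat.le_succ _)
        (ih v (by simp [(seedDist_eq_zero_iff hT).mpr hvT]) hv)
    obtain ⟨hθv, hpred⟩ := (reachedFromSeed_iff hT hvT).mp hv
    have hd' := seedDist_eq_seedDist_sub_one_add_one hT hvT
    rw [Function.iterate_succ_apply', mem_activationStep_cycleWeight,
      if_pos (ih _ (by omega) hpred), if_neg hvT, add_zero]
    exact Or.inr hθv

theorem finalSet_cycleWeight (hT : T.Nonempty) (hθ : ∀ v, θ v ∈ Set.Ioc 0 1) :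
    finalSet (cycleWeight w) θ (fun v => if v ∈ T then 1 else 0)
      = univ.filter (ReachedFromSeed T w θ) := by
  rw [finalSet_eq_iterate_activationStep, Fintype.card_fin]
  ext v
  simp only [mem_filter, mem_univ, true_and]
  refine ⟨reachedFromSeed_of_mem_iterate hT (fun v => (hθ v).1) n v, fun hv => ?_⟩
  exact monotone_iterate_activationStep (seedDist_lt hT v)
    (mem_iterate_of_reachedFromSeed hT (fun v => (hθ v).2) _ v le_rfl hv)

lemma card_image_sub_range_seedDist (hT : T.Nonempty) (v : Fin n) :
    #((range (seedDist T v)).image fun i : ℕ => v - i) = seedDist T v := by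
  rw [card_image_of_injOn, card_range]
  intro i hi j hj hij
  exact Fin.natCast_inj_of_lt ((mem_range.mp hi).trans (seedDist_lt hT v))
    ((mem_range.mp hj).trans (seedDist_lt hT v)) (sub_right_injective hij)

/-- Each vertex `v` ends up active with probability `w ^ seedDist T v`. -/
theorem integral_card_finalSet_cycleWeight (hT : T.Nonempty) (hw0 : 0 ≤ w) (hw1 : w ≤ 1) :
    ∫ θ, (#(finalSet (cycleWeight w) θ fun v => if v ∈ T then 1 else 0) : ℝ)
        ∂Measure.pi (fun _ : Fin n => volume.restrict (Set.Icc (0 : ℝ) 1))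
      = ∑ t ∈ T, ∑ i ∈ range (arcLen T t), w ^ i := by
  have hexp := integral_card_filter_forall_le
    (fun v => (range (seedDist T v)).image fun i : ℕ => v - i) hw0 hw1
  simp_rw [card_image_sub_range_seedDist hT, sum_seedDist_eq hT (w ^ ·)] at hexp
  rw [← hexp]
  refine integral_congr_ae ?_
  filter_upwards [ae_pi_uniform_mem_Ioc] with θ hθ
  rw [finalSet_cycleWeight hT hθ]
  congr 2
  ext v
  simp [ReachedFromSeed]

end Cycle

section ArcInequality

variable {α : Type*}

lemma card_mul_rpow_le_sum_pow (s : Finset α) (ℓ : α → ℕ) {w : ℝ} (hw : 0 < w) :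
    #s * w ^ ((∑ t ∈ s, ℓ t : ℝ) / #s) ≤ ∑ t ∈ s, w ^ ℓ t := by
  rcases s.eq_empty_or_nonempty with rfl | hs
  · simp
  have hK : (0 : ℝ) < #s := by exact_mod_cast hs.card_pos
  have hamgm := Real.geom_mean_le_arith_mean_weighted s (fun _ => 1 / (#s : ℝ))
    (fun t => w ^ ℓ t) (fun _ _ => by positivity) (by simp [hK.ne']) (fun _ _ => by positivity)
  have hprod : ∏ t ∈ s, (w ^ ℓ t) ^ (1 / (#s : ℝ)) = w ^ ((∑ t ∈ s, ℓ t : ℝ) / #s) := by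
    simp_rw [← Real.rpow_natCast, ← Real.rpow_mul hw.le]
    rw [← Real.rpow_sum_of_pos hw, ← sum_mul, mul_one_div]
  rw [hprod, ← mul_sum] at hamgm
  calc (#s : ℝ) * w ^ ((∑ t ∈ s, ℓ t : ℝ) / #s)
      ≤ #s * (1 / #s * ∑ t ∈ s, w ^ ℓ t) := by gcongr
    _ = ∑ t ∈ s, w ^ ℓ t := by field_simp

/-- The right side is the value of the left side at `K` equal arcs of length `n / K`. -/
lemma sum_geom_sum_arcs_le (s : Finset α) (ℓ : α → ℕ) {n K : ℕ} (hK1 : 1 ≤ K) (hKn : K < n)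
    (hs : #s = K) (hℓ : ∑ t ∈ s, ℓ t = n) :
    ∑ t ∈ s, ∑ i ∈ range (ℓ t), (1 - (K : ℝ) / n) ^ i
      ≤ n * (1 - (1 - (K : ℝ) / n) ^ ((n : ℝ) / K)) := by
  have hK : (0 : ℝ) < K := by exact_mod_cast hK1
  have hn : (0 : ℝ) < n := Nat.cast_pos.mpr (by omega)
  have hKn' : (K : ℝ) / n < 1 := (div_lt_one hn).mpr (by exact_mod_cast hKn)
  set w := 1 - (K : ℝ) / n with hw
  have hw0 : 0 < w := by linarith
  have hgeom (m : ℕ) : ∑ i ∈ range m, w ^ i = n / K * (1 - w ^ m) := by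
    have hw1 : w - 1 = -(K / n) := by rw [hw]; ring
    rw [geom_sum_eq (by linarith [show 0 < (K : ℝ) / n by positivity]), hw1]
    field_simp
    ring
  have hamgm := card_mul_rpow_le_sum_pow s ℓ hw0
  rw [hs, ← Nat.cast_sum, hℓ] at hamgm
  calc ∑ t ∈ s, ∑ i ∈ range (ℓ t), w ^ i
      = n / K * (K - ∑ t ∈ s, w ^ ℓ t) := by
        simp_rw [hgeom, ← mul_sum, sum_sub_distrib, sum_const, hs, nsmul_one]
    _ ≤ n / K * (K - K * w ^ ((n : ℝ) / K)) := by gcongr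
    _ = n * (1 - w ^ ((n : ℝ) / K)) := by field_simp

end ArcInequality

lemma cycleWeight_eq_ite_succ_mod {n : ℕ} [NeZero n] (w : ℝ) :
    cycleWeight w = fun u v : Fin n => if ((u : ℕ) + 1) % n = (v : ℕ) then w else 0 := by
  ext u v
  have h : ((u : ℕ) + 1) % n = v ↔ u = v - 1 := by
    rw [eq_sub_iff_add_eq, Fin.ext_iff, ← Nat.cast_one (R := Fin n), Fin.val_add_natCast]
  simp only [cycleWeight, h]

lemma arcLen_eq_sInf_mod {n : ℕ} [NeZero n] (T : Finset (Fin n)) (t : Fin n) :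
    arcLen T t = sInf {k : ℕ | 0 < k ∧ ∃ s ∈ T, ((t : ℕ) + k) % n = (s : ℕ)} := by
  simp [arcLen, ← Fin.val_add_natCast, ← Fin.ext_iff]

/-- On the directed cycle on `n` vertices with edge weights `1 - K/n` and i.i.d.
uniform thresholds, seeding a set `T` of `K` vertices integrally: if `len t` denotes
the length of the arc starting at the seed `t` and ending just before the next seed,
then the expected size of the final activated set is
`∑_{t ∈ T} ∑_{i=1}^{len t} (1 - K/n)^{i-1}`, which is at most
`n (1 - (1 - K/n)^{n/K})`. -/
theorem stmt9 (n K : ℕ) (hK1 : 1 ≤ K) (hKn : K < n)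
    (T : Finset (Fin n)) (hT : T.card = K) :
    let wt : Fin n → Fin n → ℝ :=
      fun u v => if ((u : ℕ) + 1) % n = (v : ℕ) then 1 - (K : ℝ) / n else 0
    let x : Fin n → ℝ := fun v => if v ∈ T then 1 else 0
    let μ : Measure (Fin n → ℝ) := Measure.pi fun _ : Fin n => volume.restrict (Set.Icc 0 1)
    let len : Fin n → ℕ := fun t => sInf {k : ℕ | 0 < k ∧ ∃ s ∈ T, ((t : ℕ) + k) % n = (s : ℕ)}
    (∫ θ, ((finalSet wt θ x).card : ℝ) ∂μ)
        = (∑ t ∈ T, ∑ i ∈ Finset.range (len t), (1 - (K : ℝ) / n) ^ i) ∧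
    (∑ t ∈ T, ∑ i ∈ Finset.range (len t), (1 - (K : ℝ) / n) ^ i)
        ≤ n * (1 - (1 - (K : ℝ) / n) ^ ((n : ℝ) / (K : ℝ))) := by
  intro wt x μ len
  have : NeZero n := ⟨by omega⟩
  have hTne : T.Nonempty := card_pos.mp (by omega)
  have hKn' : (K : ℝ) / n ≤ 1 := div_le_one_of_le₀ (by exact_mod_cast hKn.le) (by positivity)
  have hwt : wt = cycleWeight (1 - (K : ℝ) / n) := (cycleWeight_eq_ite_succ_mod _).symm
  have hlen : len = arcLen T := funext fun t => (arcLen_eq_sInf_mod T t).symm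
  rw [hwt, hlen]
  exact ⟨integral_card_finalSet_cycleWeight hTne (by linarith) (sub_le_self _ (by positivity)),
    sum_geom_sum_arcs_le T (arcLen T) hK1 hKn hT (sum_arcLen hTne)⟩
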